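/- For every integer m ≥ 0: ∑_{k=0}^m (q;q)_{m+k} q^k / (q²;q²)_k = (q²;q²)_m. -/
import Mathlib


noncomputable def qPoch (a q : ℂ) (n : ℕ) : ℂ := ∏ i ∈ Finset.range n, (1 - a * q ^ i)

noncomputable def qPochInf (a q : ℂ) : ℂ := ∏' i : ℕ, (1 - a * q ^ i)

noncomputable def qBinom (q : ℂ) (m k : ℕ) : ℂ :=
  if k ≤ m then qPoch q q m / (qPoch q q k * qPoch q q (m - k)) else 0

lemma qPoch_succ (a q : ℂ) (n : ℕ) : qPoch a q (n + 1) = qPoch a q n * (1 - a * q ^ n) :=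
  Finset.prod_range_succ _ _

lemma qPoch_sq_ne_zero (q : ℂ) (hq1 : ‖q‖ < 1) (k : ℕ) : qPoch (q ^ 2) (q ^ 2) k ≠ 0 := by
  unfold qPoch
  rw [Finset.prod_ne_zero_iff]
  intro i _
  rw [sub_ne_zero]
  intro h
  have hn : ‖q ^ 2 * (q ^ 2) ^ i‖ = ‖q‖ ^ (2 + 2 * i) := by
    rw [norm_mul, norm_pow, norm_pow, norm_pow, ← pow_mul, ← pow_add]
  have hlt : ‖q ^ 2 * (q ^ 2) ^ i‖ < 1 := by
    rw [hn]
    exact pow_lt_one₀ (norm_nonneg q) hq1 (by omega)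
  rw [← h] at hlt
  simp at hlt

theorem stmt_15 (q : ℂ) (m : ℕ) (hq0 : 0 < ‖q‖) (hq1 : ‖q‖ < 1) :
    ∑ k ∈ Finset.range (m + 1), qPoch q q (m + k) * q ^ k / qPoch (q ^ 2) (q ^ 2) k =
    qPoch (q ^ 2) (q ^ 2) m := by
  have hD := qPoch_sq_ne_zero q hq1
  induction m with
  | zero => simp [qPoch]
  | succ m ih =>
    set C : ℕ → ℂ := fun k =>
      q ^ (m + 1 - k) * (1 - q ^ (2 * k)) *
        (qPoch q q (m + k) * q ^ k / qPoch (q ^ 2) (q ^ 2) k) with hC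
    have key : ∀ k ∈ Finset.range (m + 1),
        qPoch q q (m + 1 + k) * q ^ k / qPoch (q ^ 2) (q ^ 2) k
          = (1 - q ^ (2 * m + 2)) * (qPoch q q (m + k) * q ^ k / qPoch (q ^ 2) (q ^ 2) k)
            + (C k - C (k + 1)) := by
      intro k hk
      rw [Finset.mem_range] at hk
      obtain ⟨j, rfl⟩ : ∃ j, m = k + j := ⟨m - k, by omega⟩
      have h1 : k + j + 1 + k = (k + j + k) + 1 := by ring
      have h2 : k + j + (k + 1) = (k + j + k) + 1 := by ring
      have h3 : k + j + 1 - k = j + 1 := by omega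
      have h4 : k + j + 1 - (k + 1) = j := by omega
      simp only [hC, h1, h2, h3, h4, qPoch_succ]
      have hu : (1 : ℂ) - q ^ 2 * (q ^ 2) ^ k ≠ 0 := by
        have := qPoch_sq_ne_zero q hq1 (k + 1)
        rw [qPoch_succ] at this
        exact right_ne_zero_of_mul this
      field_simp [hD k]
      ring
    rw [Finset.sum_range_succ, Finset.sum_congr rfl key, Finset.sum_add_distrib,
      Finset.sum_range_sub' C, ← Finset.mul_sum, ih]
    have h5 : m + 1 + (m + 1) = (2 * m + 1) + 1 := by ring
    have h6 : m + (m + 1) = 2 * m + 1 := by ring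
    have hu : (1 : ℂ) - q ^ 2 * (q ^ 2) ^ m ≠ 0 := by
      have := qPoch_sq_ne_zero q hq1 (m + 1)
      rw [qPoch_succ] at this
      exact right_ne_zero_of_mul this
    simp only [hC, h5, h6, qPoch_succ, Nat.sub_self, Nat.sub_zero, Nat.mul_zero,
      Nat.add_zero, pow_zero, one_mul, sub_self, mul_zero, zero_mul, zero_div, zero_sub]
    field_simp [hD m, hu]
    ring
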